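/- arXiv:1706.02854 — 2 statements merged into one kernel-verified Lean document; each statement's English description precedes it below -/
import Mathlib

section
/- An ℒ_A□-formula φ is K(A)-valid if and only if φ is valid in every finite serial K(A)-model (i.e., every K(A)-model whose set of worlds is finite and whose accessibility relation is serial). -/
/-- Formulas of the language ℒ_A□ : variables, the constant 0̄, the lattice
connectives ∧ (`and`) and ∨ (`or`), the group connectives & (`conj`) and → (`imp`),
and the modal connective □ (`box`). -/
inductive FormA : Type
  | var  : ℕ → FormA
  | zero : FormA
  | and  : FormA → FormA → FormA
  | or   : FormA → FormA → FormA
  | conj : FormA → FormA → FormA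
  | imp  : FormA → FormA → FormA
  | box  : FormA → FormA

/-- A K(A)-model: a nonempty set of worlds, an accessibility relation, and a
valuation of the variables bounded by some `r ≥ 0`. -/
structure KAModel where
  World : Type
  ne : Nonempty World
  R : World → World → Prop
  V : ℕ → World → ℝ
  r : ℝ
  hr : 0 ≤ r
  hV : ∀ p x, V p x ∈ Set.Icc (-r) r

/-- The valuation extended to all ℒ_A□-formulas.  Note that `sInf ∅ = 0` in `ℝ`,
matching the convention that the infimum of the empty set is `0`. -/
noncomputable def KAModel.val (M : KAModel) : FormA → M.World → ℝ
  | .var p, x => M.V p x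
  | .zero, _ => 0
  | .and φ ψ, x => min (M.val φ x) (M.val ψ x)
  | .or φ ψ, x => max (M.val φ x) (M.val ψ x)
  | .conj φ ψ, x => M.val φ x + M.val ψ x
  | .imp φ ψ, x => M.val ψ x - M.val φ x
  | .box φ, x => sInf {v : ℝ | ∃ y, M.R x y ∧ M.val φ y = v}

/-- Validity of a formula in a model. -/
def KAModel.ValidIn (M : KAModel) (φ : FormA) : Prop := ∀ x : M.World, 0 ≤ M.val φ x

/-- K(A)-validity. -/
def KAValid (φ : FormA) : Prop := ∀ M : KAModel, M.ValidIn φ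

/-!
If `φ` is negative at a world `x` of some model, it is also negative in a finite serial model.
First make the model serial by sending every dead end to a reflexive sink on which every
formula vanishes; no value changes, since `□ψ` is `inf ∅ = 0` at a dead end. Then unravel the
model from `x` into a finite tree whose depth is the number `n` of boxes in `φ`: a node is a list
of formulas `ψ` with `□ψ` occurring in `φ`, and appending `ψ` moves to a successor at which `ψ`
is within `ε` of its infimum over all successors. The finitely many children of a node then
compute each box within `ε` of its true value, so by induction every subformula `χ` is computed
within `(number of boxes in χ) · ε`. A second sink makes the tree serial, and `ε` is chosen
small.
-/

def FormA.boxArgs : FormA → List FormA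
  | .var _ | .zero => []
  | .and a b | .or a b | .conj a b | .imp a b => a.boxArgs ++ b.boxArgs
  | .box a => a :: a.boxArgs

namespace KAModel

variable (M : KAModel)

theorem val_box (φ : FormA) (x : M.World) :
    M.val (.box φ) x = sInf (M.val φ '' {y | M.R x y}) := rfl

theorem exists_abs_val_le (φ : FormA) : ∃ B, ∀ x, |M.val φ x| ≤ B := by
  induction φ with
  | var p => exact ⟨M.r, fun x => abs_le.mpr (M.hV p x)⟩
  | zero => exact ⟨0, fun x => by simp [val]⟩
  | and a b iha ihb | or a b iha ihb | conj a b iha ihb | imp a b iha ihb =>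
    obtain ⟨A, hA⟩ := iha
    obtain ⟨B, hB⟩ := ihb
    refine ⟨A + B, fun x => ?_⟩
    have ha := abs_le.mp (hA x)
    have hb := abs_le.mp (hB x)
    simp only [val, abs_le]
    constructor <;> grind
  | box a ih =>
    obtain ⟨B, hB⟩ := ih
    refine ⟨|B|, fun x => ?_⟩
    rw [val_box]
    rcases (M.val a '' {y | M.R x y}).eq_empty_or_nonempty with h | h
    · simp [h]
    · have hlow : ∀ v ∈ M.val a '' {y | M.R x y}, -|B| ≤ v := by
        rintro _ ⟨y, -, rfl⟩
        exact (neg_le_neg (le_abs_self B)).trans (abs_le.mp (hB y)).1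
      obtain ⟨_, ⟨y, hy, rfl⟩⟩ := h
      rw [abs_le]
      refine ⟨le_csInf ⟨_, y, hy, rfl⟩ hlow,
        (csInf_le ⟨_, hlow⟩ ⟨y, hy, rfl⟩).trans ?_⟩
      exact (abs_le.mp (hB y)).2.trans (le_abs_self B)

-- `sInf` of a set of reals that is unbounded below is `0`, so `□` needs this to be an infimum.
theorem bddBelow_val_image (φ : FormA) (s : Set M.World) : BddBelow (M.val φ '' s) := by
  obtain ⟨B, hB⟩ := M.exists_abs_val_le φ
  exact ⟨-B, by rintro _ ⟨y, -, rfl⟩; exact (abs_le.mp (hB y)).1⟩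

variable {M} {φ : FormA} {x y : M.World}

theorem val_box_le (h : M.R x y) : M.val (.box φ) x ≤ M.val φ y :=
  csInf_le (M.bddBelow_val_image φ _) ⟨y, h, rfl⟩

theorem le_val_box {c : ℝ} (hx : ∃ y, M.R x y) (h : ∀ y, M.R x y → c ≤ M.val φ y) :
    c ≤ M.val (.box φ) x := by
  obtain ⟨y, hy⟩ := hx
  exact le_csInf ⟨_, y, hy, rfl⟩ (by rintro _ ⟨z, hz, rfl⟩; exact h z hz)

theorem val_box_of_forall_not_rel (h : ∀ y, ¬ M.R x y) : M.val (.box φ) x = 0 := by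
  simp [val_box, h]

theorem exists_rel_val_lt_val_box_add (hx : ∃ y, M.R x y) {ε : ℝ} (hε : 0 < ε) :
    ∃ y, M.R x y ∧ M.val φ y < M.val (.box φ) x + ε := by
  obtain ⟨y, hy⟩ := hx
  obtain ⟨_, ⟨z, hz, rfl⟩, hlt⟩ :=
    exists_lt_of_csInf_lt (s := M.val φ '' {y | M.R x y}) ⟨_, y, hy, rfl⟩
      (lt_add_of_pos_right (M.val (.box φ) x) hε)
  exact ⟨z, hz, hlt⟩

variable (M)

def withSink : KAModel where
  World := Option M.World
  ne := ⟨none⟩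
  R
    | some x, some y => M.R x y
    | some x, none => ∀ y, ¬ M.R x y
    | none, w => w = none
  V p w := w.elim 0 (M.V p)
  r := M.r
  hr := M.hr
  hV p
    | none => Set.mem_Icc.mpr ⟨neg_nonpos.mpr M.hr, M.hr⟩
    | some x => M.hV p x

theorem withSink_serial (w : M.withSink.World) : ∃ w', M.withSink.R w w' := by
  rcases w with _ | x
  · exact ⟨none, rfl⟩
  · by_cases hx : ∃ y, M.R x y
    · obtain ⟨y, hy⟩ := hx
      exact ⟨some y, hy⟩
    · exact ⟨none, not_exists.mp hx⟩

theorem withSink_val_none (φ : FormA) : M.withSink.val φ none = 0 := by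
  induction φ with
  | var p | zero => rfl
  | and a b iha ihb | or a b iha ihb | conj a b iha ihb | imp a b iha ihb =>
    simp [val, iha, ihb]
  | box a ih =>
    apply le_antisymm
    · exact (val_box_le (M := M.withSink) (x := none) (y := none) rfl).trans_eq ih
    · refine le_val_box ⟨none, rfl⟩ ?_
      rintro w (rfl : w = none)
      exact ih.ge

theorem withSink_val_some (φ : FormA) (x : M.World) : M.withSink.val φ (some x) = M.val φ x := by
  induction φ generalizing x with
  | var p | zero => rfl
  | and a b iha ihb | or a b iha ihb | conj a b iha ihb | imp a b iha ihb =>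
    simp [val, iha, ihb]
  | box a ih =>
    by_cases hx : ∃ y, M.R x y
    · obtain ⟨y₀, hy₀⟩ := hx
      apply le_antisymm
      · exact le_val_box ⟨y₀, hy₀⟩ fun y hy =>
          (val_box_le (M := M.withSink) (x := some x) (y := some y) hy).trans_eq (ih y)
      · refine le_val_box ⟨some y₀, hy₀⟩ ?_
        rintro (_ | y) hy
        · exact absurd hy₀ (hy y₀)
        · exact (val_box_le (M := M) hy).trans_eq (ih y).symm
    · simp only [not_exists] at hx
      rw [val_box_of_forall_not_rel hx]
      apply le_antisymm
      · exact (val_box_le (M := M.withSink) (x := some x) (y := none) hx).trans_eq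
          (M.withSink_val_none a)
      · refine le_val_box ⟨none, hx⟩ ?_
        rintro (_ | y) hy
        · exact (M.withSink_val_none a).ge
        · exact absurd hy (hx y)

section Unravel

variable (hM : ∀ x, ∃ y, M.R x y) {ε : ℝ} (hε : 0 < ε)

noncomputable def approxSucc (ψ : FormA) (x : M.World) : M.World :=
  (exists_rel_val_lt_val_box_add (φ := ψ) (hM x) hε).choose

theorem approxSucc_spec (ψ : FormA) (x : M.World) :
    M.R x (M.approxSucc hM hε ψ x) ∧
      M.val ψ (M.approxSucc hM hε ψ x) < M.val (.box ψ) x + ε :=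
  (exists_rel_val_lt_val_box_add (φ := ψ) (hM x) hε).choose_spec

variable (Γ : List FormA) (x₀ : M.World) (d : ℕ)

noncomputable def pathEnd (l : List {ψ // ψ ∈ Γ}) : M.World :=
  l.foldr (fun ψ y => M.approxSucc hM hε ψ y) x₀

theorem pathEnd_cons (ψ : {ψ // ψ ∈ Γ}) (l : List {ψ // ψ ∈ Γ}) :
    M.pathEnd hM hε Γ x₀ (ψ :: l) = M.approxSucc hM hε ψ (M.pathEnd hM hε Γ x₀ l) := rfl

noncomputable def unravel : KAModel where
  World := {l : List {ψ // ψ ∈ Γ} // l.length ≤ d}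
  ne := ⟨⟨[], Nat.zero_le d⟩⟩
  R l l' := ∃ ψ, l'.1 = ψ :: l.1
  V p l := M.V p (M.pathEnd hM hε Γ x₀ l.1)
  r := M.r
  hr := M.hr
  hV p _ := M.hV p _

theorem finite_unravel_world : Finite (M.unravel hM hε Γ x₀ d).World :=
  have : Finite {ψ // ψ ∈ Γ} := Γ.finite_toSet.to_subtype
  (List.finite_length_le _ d).to_subtype

theorem abs_unravel_val_sub_le (χ : FormA) (hχ : χ.boxArgs ⊆ Γ)
    (l : (M.unravel hM hε Γ x₀ d).World) (hl : l.1.length + χ.boxArgs.length ≤ d) :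
    |(M.unravel hM hε Γ x₀ d).val χ l - M.val χ (M.pathEnd hM hε Γ x₀ l.1)| ≤
      χ.boxArgs.length * ε := by
  induction χ generalizing l with
  | var p | zero => simp [val, unravel, FormA.boxArgs]
  | and a b iha ihb | or a b iha ihb | conj a b iha ihb | imp a b iha ihb =>
    simp only [FormA.boxArgs, List.append_subset, List.length_append] at hχ hl ⊢
    have ha := abs_le.mp (iha hχ.1 l (by omega))
    have hb := abs_le.mp (ihb hχ.2 l (by omega))
    simp only [val, abs_le]
    push_cast
    constructor <;> grind
  | box a ih =>
    simp only [FormA.boxArgs, List.cons_subset, List.length_cons] at hχ hl ⊢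
    let child (ψ : {ψ // ψ ∈ Γ}) : (M.unravel hM hε Γ x₀ d).World :=
      ⟨ψ :: l.1, by simp; omega⟩
    have hchild (ψ : {ψ // ψ ∈ Γ}) : (M.unravel hM hε Γ x₀ d).R l (child ψ) :=
      ⟨ψ, rfl⟩
    have ih_child (ψ : {ψ // ψ ∈ Γ}) :=
      abs_le.mp (ih hχ.2 (child ψ) (by simp only [child, List.length_cons]; omega))
    simp only [child, pathEnd_cons] at ih_child
    have hlower : M.val (.box a) (M.pathEnd hM hε Γ x₀ l.1) - a.boxArgs.length * ε ≤
        (M.unravel hM hε Γ x₀ d).val (.box a) l := by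
      refine le_val_box ⟨_, hchild ⟨a, hχ.1⟩⟩ fun w ⟨ψ, hw⟩ => ?_
      obtain rfl : w = child ψ := Subtype.ext hw
      have := val_box_le (φ := a) (M.approxSucc_spec hM hε ψ (M.pathEnd hM hε Γ x₀ l.1)).1
      linarith [(ih_child ψ).1]
    have hupper : (M.unravel hM hε Γ x₀ d).val (.box a) l ≤
        M.val (.box a) (M.pathEnd hM hε Γ x₀ l.1) + (a.boxArgs.length + 1) * ε := by
      have := val_box_le (φ := a) (hchild ⟨a, hχ.1⟩)
      have := (M.approxSucc_spec hM hε a (M.pathEnd hM hε Γ x₀ l.1)).2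
      linarith [(ih_child ⟨a, hχ.1⟩).2]
    rw [abs_le]
    push_cast
    constructor <;> linarith

end Unravel

theorem exists_finite_serial_abs_val_sub_le (φ : FormA) (x : M.World) {ε : ℝ} (hε : 0 < ε) :
    ∃ N : KAModel, Finite N.World ∧ (∀ w : N.World, ∃ w', N.R w w') ∧
      ∃ w : N.World, |N.val φ w - M.val φ x| ≤ ε := by
  set n := φ.boxArgs.length
  have hδ : 0 < ε / (n + 1) := by positivity
  let T := M.withSink.unravel M.withSink_serial hδ φ.boxArgs (some x) n
  let root : T.World := ⟨[], Nat.zero_le n⟩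
  have : Finite T.World := finite_unravel_world ..
  refine ⟨T.withSink, inferInstanceAs (Finite (Option T.World)), T.withSink_serial,
    some root, ?_⟩
  have hT := abs_unravel_val_sub_le M.withSink M.withSink_serial hδ φ.boxArgs (some x) n
    φ (List.Subset.refl _) root (by simp [root, n])
  rw [show M.withSink.pathEnd _ hδ _ (some x) root.1 = some x from rfl, withSink_val_some] at hT
  rw [withSink_val_some]
  calc _ ≤ n * (ε / (n + 1)) := hT
    _ ≤ ε := by
      rw [mul_div_assoc']
      exact div_le_of_le_mul₀ (by positivity) hε.le (by nlinarith)

end KAModel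

/-- An ℒ_A□-formula φ is K(A)-valid if and only if φ is valid in every
finite serial K(A)-model. -/
theorem stmt_0 (φ : FormA) :
    KAValid φ ↔
      ∀ M : KAModel, Finite M.World → (∀ x : M.World, ∃ y, M.R x y) → M.ValidIn φ := by
  refine ⟨fun h M _ _ => h M, fun h M x => ?_⟩
  by_contra! hx
  obtain ⟨N, hfin, hser, w, hw⟩ :=
    M.exists_finite_serial_abs_val_sub_le φ x (by linarith : 0 < -M.val φ x / 2)
  linarith [h N hfin hser w, (abs_le.mp hw).2]
end

section
/- For every ℒ_Ł□-formula φ: φ is K(Ł)-valid if and only if its translation φ* is K(A^c)-valid. -/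
/-- Formulas of the language ℒ_Ł□ : variables, ∼ (`neg`), ⊃ (`limp`) and □ (`box`). -/
inductive FormL : Type
  | var  : ℕ → FormL
  | neg  : FormL → FormL
  | limp : FormL → FormL → FormL
  | box  : FormL → FormL

/-- A K(Ł)-model: a nonempty set of worlds, an accessibility relation, and a
valuation of the variables into [0,1]. -/
structure KLModel where
  World : Type
  ne : Nonempty World
  R : World → World → Prop
  V : ℕ → World → ℝ
  hV : ∀ p x, V p x ∈ Set.Icc (0 : ℝ) 1

/-- The valuation extended to all ℒ_Ł□-formulas.  The box is interpreted by the
infimum taken in [0,1]: since all values lie in [0,1], inserting `1` into the set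
yields exactly this infimum (in particular the infimum of the empty set is 1). -/
noncomputable def KLModel.val (M : KLModel) : FormL → M.World → ℝ
  | .var p, x => M.V p x
  | .neg φ, x => 1 - M.val φ x
  | .limp φ ψ, x => min 1 (1 - M.val φ x + M.val ψ x)
  | .box φ, x => sInf (insert 1 {v : ℝ | ∃ y, M.R x y ∧ M.val φ y = v})

/-- K(Ł)-validity: value 1 at every world of every K(Ł)-model. -/
def KLValid (φ : FormL) : Prop := ∀ (M : KLModel) (x : M.World), M.val φ x = 1

/-- Formulas of the language ℒ_{A^c}□ : ℒ_A□ extended with an extra constant `c`. -/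
inductive FormAc : Type
  | var  : ℕ → FormAc
  | zero : FormAc
  | c    : FormAc
  | and  : FormAc → FormAc → FormAc
  | or   : FormAc → FormAc → FormAc
  | conj : FormAc → FormAc → FormAc
  | imp  : FormAc → FormAc → FormAc
  | box  : FormAc → FormAc

/-- A K(A^c)-model: a K(A)-model together with a real `cM` interpreting `c`. -/
structure KAcModel where
  World : Type
  ne : Nonempty World
  R : World → World → Prop
  V : ℕ → World → ℝ
  r : ℝ
  hr : 0 ≤ r
  hV : ∀ p x, V p x ∈ Set.Icc (-r) r
  cM : ℝ

/-- The valuation extended to all ℒ_{A^c}□-formulas (`sInf ∅ = 0` in `ℝ`, matching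
the convention that the infimum of the empty set is 0). -/
noncomputable def KAcModel.val (M : KAcModel) : FormAc → M.World → ℝ
  | .var p, x => M.V p x
  | .zero, _ => 0
  | .c, _ => M.cM
  | .and φ ψ, x => min (M.val φ x) (M.val ψ x)
  | .or φ ψ, x => max (M.val φ x) (M.val ψ x)
  | .conj φ ψ, x => M.val φ x + M.val ψ x
  | .imp φ ψ, x => M.val ψ x - M.val φ x
  | .box φ, x => sInf {v : ℝ | ∃ y, M.R x y ∧ M.val φ y = v}

/-- K(A^c)-validity. -/
def KAcValid (φ : FormAc) : Prop := ∀ (M : KAcModel) (x : M.World), 0 ≤ M.val φ x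

/-- `⊥ := c ∧ ¬c`, where `¬φ := φ → 0̄`. -/
def botAc : FormAc := .and .c (.imp .c .zero)

/-- The translation * from ℒ_Ł□-formulas to ℒ_{A^c}□-formulas. -/
def star : FormL → FormAc
  | .var p => .or (.and (.var p) .zero) botAc
  | .neg φ => .imp (star φ) botAc
  | .limp φ ψ => .and (.imp (star φ) (star ψ)) .zero
  | .box φ => .box (star φ)


/-! In a K(A^c)-model the formula `⊥` has the constant value `b = -|c| ≤ 0`, and every
translation `φ*` evaluates to `b · (1 - φ)`, where `φ` is evaluated in the K(Ł)-model obtained by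
clamping the variables to `[b, 0]` and rescaling `[b, 0]` linearly onto `[0, 1]`. Hence a K(Ł)-valid
`φ` has `φ* = 0` everywhere. Conversely, every K(Ł)-model arises in this way from the K(A^c)-model
with `c = -1` whose variables are shifted down by `1`; there `φ* = φ - 1`, so `0 ≤ φ*` forces
`φ = 1`. -/

lemma KLModel.val_mem_Icc (M : KLModel) (φ : FormL) (x : M.World) :
    M.val φ x ∈ Set.Icc (0 : ℝ) 1 := by
  induction φ generalizing x with
  | var p => exact M.hV p x
  | neg φ ih =>
    obtain ⟨h0, h1⟩ := ih x
    show 1 - M.val φ x ∈ Set.Icc 0 1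
    exact ⟨by linarith, by linarith⟩
  | limp φ ψ ihφ ihψ =>
    obtain ⟨h0, h1⟩ := ihφ x
    obtain ⟨h2, -⟩ := ihψ x
    exact ⟨le_min zero_le_one (by linarith), min_le_left _ _⟩
  | box φ ih =>
    have hlb : ∀ v ∈ insert 1 {v : ℝ | ∃ y, M.R x y ∧ M.val φ y = v}, 0 ≤ v := by
      rintro v (rfl | ⟨y, -, rfl⟩)
      exacts [zero_le_one, (ih y).1]
    exact ⟨le_csInf ⟨1, Set.mem_insert _ _⟩ hlb, csInf_le ⟨0, hlb⟩ (Set.mem_insert _ _)⟩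

lemma KAcModel.val_botAc (M : KAcModel) (x : M.World) : M.val botAc x = -|M.cM| := by
  show min M.cM (0 - M.cM) = -|M.cM|
  rw [zero_sub, abs_eq_max_neg, ← min_neg_neg, neg_neg, min_comm]

lemma mul_div_cancel_of_le_of_nonpos {b t : ℝ} (hbt : b ≤ t) (ht : t ≤ 0) :
    b * (t / b) = t := by
  rcases eq_or_ne b 0 with rfl | hb
  · rw [le_antisymm ht hbt, zero_mul]
  · exact mul_div_cancel₀ t hb

/-- The two conventions for the empty infimum (`1` in `[0, 1]`, `0` in `ℝ`) agree under
`t ↦ b * (1 - t)`. -/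
lemma sInf_image_mul_one_sub {b : ℝ} (hb : b ≤ 0) {S : Set ℝ} (hS : S ⊆ Set.Icc 0 1) :
    sInf ((fun t => b * (1 - t)) '' S) = b * (1 - sInf (insert 1 S)) := by
  rcases S.eq_empty_or_nonempty with rfl | hne
  · simp
  have hbdd : BddBelow S := ⟨0, fun v hv => (hS hv).1⟩
  have hmono : Monotone fun t : ℝ => b * (1 - t) := fun u w huw => by
    simp only
    nlinarith
  rw [← hmono.map_csInf_of_continuousAt (by fun_prop) hne hbdd, csInf_insert hbdd hne,
    min_eq_right ((csInf_le hbdd hne.some_mem).trans (hS hne.some_mem).2)]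

noncomputable def KAcModel.toKL (M : KAcModel) : KLModel where
  World := M.World
  ne := M.ne
  R := M.R
  V p x := 1 - max (min (M.V p x) 0) (-|M.cM|) / (-|M.cM|)
  hV p x := by
    have hb : -|M.cM| ≤ 0 := neg_nonpos.mpr (abs_nonneg _)
    have hbt : -|M.cM| ≤ max (min (M.V p x) 0) (-|M.cM|) := le_max_right _ _
    have ht : max (min (M.V p x) 0) (-|M.cM|) ≤ 0 := max_le (min_le_right _ _) hb
    constructor
    · linarith [div_le_one_of_ge hbt hb]
    · linarith [div_nonneg_of_nonpos ht hb]

lemma KAcModel.val_star (M : KAcModel) (φ : FormL) (x : M.World) :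
    M.val (star φ) x = -|M.cM| * (1 - M.toKL.val φ x) := by
  have hb : -|M.cM| ≤ 0 := neg_nonpos.mpr (abs_nonneg _)
  induction φ generalizing x with
  | var p =>
    show max (min (M.V p x) 0) (M.val botAc x) = -|M.cM| * (1 - M.toKL.V p x)
    rw [M.val_botAc, show M.toKL.V p x = 1 - _ from rfl, sub_sub_cancel,
      mul_div_cancel_of_le_of_nonpos (le_max_right _ _) (max_le (min_le_right _ _) hb)]
  | neg φ ih =>
    show M.val botAc x - M.val (star φ) x = -|M.cM| * (1 - (1 - M.toKL.val φ x))
    rw [M.val_botAc, ih]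
    ring
  | limp φ ψ ihφ ihψ =>
    show min (M.val (star ψ) x - M.val (star φ) x) 0
        = -|M.cM| * (1 - min 1 (1 - M.toKL.val φ x + M.toKL.val ψ x))
    rw [ihφ, ihψ]
    rcases le_total (M.toKL.val φ x) (M.toKL.val ψ x) with h | h
    · rw [min_eq_left (a := 1) (by linarith), min_eq_right (b := 0) (by nlinarith)]
      ring
    · rw [min_eq_right (b := 1 - _ + _) (by linarith), min_eq_left (b := 0) (by nlinarith)]
      ring
  | box φ ih =>
    show sInf ((M.val (star φ)) '' {y | M.R x y})
        = -|M.cM| * (1 - sInf (insert 1 ((M.toKL.val φ) '' {y | M.R x y})))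
    rw [funext ih, ← sInf_image_mul_one_sub hb, Set.image_image]
    · rfl
    rintro _ ⟨y, -, rfl⟩
    exact M.toKL.val_mem_Icc φ y

def KLModel.toKAc (N : KLModel) : KAcModel where
  World := N.World
  ne := N.ne
  R := N.R
  V p y := N.V p y - 1
  r := 1
  hr := zero_le_one
  hV p y := ⟨by linarith [(N.hV p y).1], by linarith [(N.hV p y).2]⟩
  cM := -1

lemma KLModel.toKAc_toKL (N : KLModel) : N.toKAc.toKL = N := by
  obtain ⟨W, ne, R, V, hV⟩ := N
  show KLModel.mk W _ R _ _ = KLModel.mk W ne R V hV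
  congr
  funext p y
  obtain ⟨h0, h1⟩ := hV p y
  show 1 - max (min (V p y - 1) 0) (-|(-1 : ℝ)|) / -|(-1 : ℝ)| = V p y
  rw [abs_neg, abs_one, min_eq_left (by linarith), max_eq_left (by linarith)]
  ring

lemma KLModel.val_toKAc_toKL (N : KLModel) (φ : FormL) (x : N.World) :
    N.toKAc.toKL.val φ x = N.val φ x := by
  have := N.toKAc_toKL
  -- `rw [this]` would produce an ill-typed motive, since `x : N.World`
  congr

/-- For every ℒ_Ł□-formula φ: φ is K(Ł)-valid if and only if its
translation φ* is K(A^c)-valid. -/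
theorem stmt_1 (φ : FormL) : KLValid φ ↔ KAcValid (star φ) := by
  constructor
  · intro hL M x
    rw [M.val_star, hL M.toKL x, sub_self, mul_zero]
  · intro hA N x
    have hstar := hA N.toKAc x
    rw [N.toKAc.val_star φ x, N.val_toKAc_toKL, show N.toKAc.cM = -1 from rfl, abs_neg,
      abs_one] at hstar
    linarith [(N.val_mem_Icc φ x).2]
end
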